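/- Let G be a trimmed leveled normalized mapping DAG and let Λ be a level set of G other than the singleton of the final vertex. Then M(Λ) equals the union, over all pairs (S, Λ″) ∈ NextLevel(Λ), of the sets {S ∪ μ : μ ∈ M(Λ″)}; furthermore this union is disjoint (the sets indexed by distinct pairs are pairwise disjoint), NextLevel(Λ) is non-empty, and none of the sets {S ∪ μ : μ ∈ M(Λ″)} is empty. -/

import Mathlib

namespace Spanners

/-- Variable markers: an open marker `⊢x` or a close marker `x⊣` for a variable `x`. -/
inductive Marker (V : Type) : Type where
  | openM : V → Marker V
  | closeM : V → Marker V
deriving DecidableEq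

/-- A variable-set automaton (VA) over alphabet `Sig`, variables `V`, states `Q`. -/
structure VA (Sig V Q : Type) : Type where
  init : Q
  final : Set Q
  letterTr : Q → Sig → Q → Prop
  varTr : Q → Marker V → Q → Prop

namespace VA

variable {Sig V Q : Type}

/-- `Run A d (q, i) L (q', i')` holds when there is a run of `A` on `d` from configuration
`(q, i)` to configuration `(q', i')` reading the list `L` of (marker, position) pairs,
in order. Letter transitions advance the position and must match the document letter;
variable transitions keep the position and read their marker at that position. -/
inductive Run (A : VA Sig V Q) (d : List Sig) :
    Q × ℕ → List (Marker V × ℕ) → Q × ℕ → Prop where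
  | refl (c : Q × ℕ) : Run A d c [] c
  | stepLetter {q : Q} {i : ℕ} {a : Sig} {q' : Q} {L : List (Marker V × ℕ)} {c : Q × ℕ} :
      A.letterTr q a q' → d[i]? = some a →
      Run A d (q', i + 1) L c → Run A d (q, i) L c
  | stepVar {q : Q} {i : ℕ} {m : Marker V} {q' : Q} {L : List (Marker V × ℕ)} {c : Q × ℕ} :
      A.varTr q m q' →
      Run A d (q', i) L c → Run A d (q, i) ((m, i) :: L) c

/-- An accepting run of `A` on `d`, reading the trace `L`: it goes from the initial
configuration `(q₀, 0)` to a configuration `(q_f, |d|)` with `q_f` final. -/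
def Accepting (A : VA Sig V Q) (d : List Sig) (L : List (Marker V × ℕ)) : Prop :=
  ∃ qf, qf ∈ A.final ∧ A.Run d (A.init, 0) L (qf, d.length)

/-- Validity of a trace: every variable marker is read at most once, and whenever
`⊢x` is read at position `i` then `x⊣` is read at some position `i' ≥ i`. -/
def ValidTrace (L : List (Marker V × ℕ)) : Prop :=
  (∀ (m : Marker V) (k k' : ℕ) (hk : k < L.length) (hk' : k' < L.length),
      (L.get ⟨k, hk⟩).1 = m → (L.get ⟨k', hk'⟩).1 = m → k = k') ∧
  (∀ (x : V) (i : ℕ), (Marker.openM x, i) ∈ L →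
      ∃ i', i ≤ i' ∧ (Marker.closeM x, i') ∈ L)

/-- A valid run: an accepting run whose trace is valid. -/
def Valid (A : VA Sig V Q) (d : List Sig) (L : List (Marker V × ℕ)) : Prop :=
  A.Accepting d L ∧ ValidTrace L

/-- The mapping defined by (the trace of) a valid run: the graph of the partial function
sending each variable `x` to the span `[i, i'⟩` such that `⊢x` is read at `i` and
`x⊣` is read at `i'`. -/
def traceMapping (L : List (Marker V × ℕ)) : Set (V × ℕ × ℕ) :=
  {p | (Marker.openM p.1, p.2.1) ∈ L ∧ (Marker.closeM p.1, p.2.2) ∈ L}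

/-- The document spanner of a VA: to each document it assigns the set of mappings
of its valid runs. -/
def spanner (A : VA Sig V Q) (d : List Sig) : Set (Set (V × ℕ × ℕ)) :=
  {m | ∃ L, A.Valid d L ∧ m = traceMapping L}

/-- A VA is sequential when, on every document, every accepting run is valid. -/
def Sequential (A : VA Sig V Q) : Prop :=
  ∀ (d : List Sig) (L : List (Marker V × ℕ)), A.Accepting d L → ValidTrace L

/-- Two VAs are equivalent when their document spanners agree on every document. -/
def Equivalent {Q' : Type} (A : VA Sig V Q) (B : VA Sig V Q') : Prop :=
  ∀ d : List Sig, A.spanner d = B.spanner d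

/-- A VA is trimmed when every state appears in some accepting run on some document. -/
def Trimmed (A : VA Sig V Q) : Prop :=
  ∀ q : Q, ∃ (d : List Sig) (i : ℕ) (L₁ L₂ : List (Marker V × ℕ)) (qf : Q),
    qf ∈ A.final ∧ A.Run d (A.init, 0) L₁ (q, i) ∧ A.Run d (q, i) L₂ (qf, d.length)

/-- The mappings of a VA on a document, each written as the set of pairs `(m, i)` of a
marker `m` read at position `i` in a valid run. -/
def mappings (A : VA Sig V Q) (d : List Sig) : Set (Set (Marker V × ℕ)) :=
  {T | ∃ L, A.Valid d L ∧ T = {p | p ∈ L}}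

end VA

/-- A labeled leveled-style DAG structure used for mapping DAGs: vertices are pairs whose
second component is a nonnegative integer (the level); each edge label is either `none`
(an ε-edge) or `some S` for a finite set `S` of (marker, position) pairs (a marker edge). -/
structure LMDAG (β M : Type) : Type where
  verts : Set (β × ℕ)
  init : β × ℕ
  final : β × ℕ
  edge : β × ℕ → Option (Finset (M × ℕ)) → β × ℕ → Prop

namespace LMDAG

variable {β M : Type}

/-- Paths in the DAG, recording the list of edge labels traversed. -/
inductive Path (G : LMDAG β M) : β × ℕ → List (Option (Finset (M × ℕ))) → β × ℕ → Prop where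
  | refl (v : β × ℕ) : Path G v [] v
  | step {u : β × ℕ} {l : Option (Finset (M × ℕ))} {v : β × ℕ}
      {L : List (Option (Finset (M × ℕ)))} {w : β × ℕ} :
      G.edge u l v → Path G v L w → Path G u (l :: L) w

/-- The mapping `μ(π)` of a path, given by its list of labels: the union of the labels
of its marker edges. -/
def mu (L : List (Option (Finset (M × ℕ)))) : Set (M × ℕ) :=
  {p | ∃ S : Finset (M × ℕ), some S ∈ L ∧ p ∈ S}

/-- Requirements of a mapping DAG: initial and final vertices and edge endpoints are
vertices, the graph is acyclic, and on every path the labels of the marker edges are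
pairwise disjoint. -/
def IsMappingDAG (G : LMDAG β M) : Prop :=
  G.init ∈ G.verts ∧ G.final ∈ G.verts ∧
  (∀ u l v, G.edge u l v → u ∈ G.verts ∧ v ∈ G.verts) ∧
  (∀ v L, G.Path v L v → L = []) ∧
  (∀ u L w, G.Path u L w →
    L.Pairwise fun l₁ l₂ => ∀ S₁ S₂ : Finset (M × ℕ),
      l₁ = some S₁ → l₂ = some S₂ → Disjoint S₁ S₂)

/-- Label lists that start with a marker edge, end with an ε-edge, and alternate
between marker edges and ε-edges. -/
inductive Alt : List (Option (Finset (M × ℕ))) → Prop where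
  | base (S : Finset (M × ℕ)) : Alt [some S, none]
  | cons (S : Finset (M × ℕ)) {L : List (Option (Finset (M × ℕ)))} :
      Alt L → Alt (some S :: none :: L)

/-- A mapping DAG is normalized if every path from the initial vertex to the final vertex
starts with a marker edge, ends with an ε-edge, and alternates between marker edges
and ε-edges. -/
def Normalized (G : LMDAG β M) : Prop :=
  ∀ L, G.Path G.init L G.final → Alt L

/-- A mapping DAG is leveled if the initial vertex has level 0, every ε-edge increases
the level by exactly one, every marker edge preserves the level, and every pair `(m, i)`
in the label of a marker edge has `i` equal to the level of its endpoints. -/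
def Leveled (G : LMDAG β M) : Prop :=
  G.init.2 = 0 ∧
  (∀ u v, G.edge u none v → v.2 = u.2 + 1) ∧
  (∀ u S v, G.edge u (some S) v → v.2 = u.2 ∧ ∀ p ∈ S, p.2 = u.2)

/-- A mapping DAG is trimmed if every vertex is accessible from the initial vertex and
co-accessible to the final vertex. -/
def Trimmed (G : LMDAG β M) : Prop :=
  ∀ v ∈ G.verts, (∃ L, G.Path G.init L v) ∧ (∃ L, G.Path v L G.final)

/-- `M(U)`: the set of mappings of paths from a vertex of `U` to the final vertex. -/
def MapSet (G : LMDAG β M) (U : Set (β × ℕ)) : Set (Set (M × ℕ)) :=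
  {T | ∃ v ∈ U, ∃ L, G.Path v L G.final ∧ T = mu L}

/-- A level set: either the singleton of the final vertex, or a non-empty set of vertices
which all have the same level and are each the source of some marker edge. -/
def IsLevelSet (G : LMDAG β M) (Λ : Set (β × ℕ)) : Prop :=
  Λ = {G.final} ∨
  (Λ.Nonempty ∧ (∃ i, ∀ v ∈ Λ, v.2 = i) ∧
    ∀ v ∈ Λ, v ∈ G.verts ∧ ∃ S w, G.edge v (some S) w)

/-- The level of a level set (the common level of its vertices). -/
noncomputable def levelOf (Λ : Set (β × ℕ)) : ℕ := sInf {i | ∃ v ∈ Λ, v.2 = i}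

/-- `NextLevel(Λ)`: the pairs `(S, Λ'')` where `S` labels some marker edge starting in `Λ`,
and `Λ''` is the set of vertices reached from a vertex of `Λ` by a marker edge labeled `S`
followed by an ε-edge. -/
def NextLevel (G : LMDAG β M) (Λ : Set (β × ℕ)) :
    Set (Finset (M × ℕ) × Set (β × ℕ)) :=
  {p | (∃ v ∈ Λ, ∃ v', G.edge v (some p.1) v') ∧
       p.2 = {w | ∃ v ∈ Λ, ∃ v', G.edge v (some p.1) v' ∧ G.edge v' none w}}

/-- A vertex which is the final vertex or has an outgoing edge whose label is neither
ε nor ∅. -/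
def GoodVert (G : LMDAG β M) (v : β × ℕ) : Prop :=
  v = G.final ∨ ∃ (S : Finset (M × ℕ)) (w : β × ℕ), G.edge v (some S) w ∧ S ≠ ∅

/-- Reachability by a directed path. -/
def Reachable (G : LMDAG β M) (u v : β × ℕ) : Prop := ∃ L, G.Path u L v

/-- The jump level `JL(Λ)`: the first level `j ≥ level(Λ)` containing a vertex `v'`
reachable from some vertex of `Λ` such that `v'` is the final vertex or has an outgoing
edge whose label is neither ε nor ∅. -/
noncomputable def JL (G : LMDAG β M) (Λ : Set (β × ℕ)) : ℕ :=
  sInf {j | levelOf Λ ≤ j ∧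
    ∃ v', v'.2 = j ∧ G.GoodVert v' ∧ ∃ v ∈ Λ, G.Reachable v v'}

/-- The jump set `Jump(Λ)`: `Λ` itself if `JL(Λ) = level(Λ)`, and otherwise the set of
vertices at level `JL(Λ)` reachable from some vertex of `Λ` by a directed path whose
last edge is an ε-edge. -/
def JumpSet (G : LMDAG β M) (Λ : Set (β × ℕ)) : Set (β × ℕ) :=
  {w | (G.JL Λ = levelOf Λ ∧ w ∈ Λ) ∨
       (G.JL Λ ≠ levelOf Λ ∧ w.2 = G.JL Λ ∧
         ∃ v ∈ Λ, ∃ L v', G.Path v L v' ∧ G.edge v' none w)}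

/-- `Reach(i, j)` relates a vertex `u` of level `i` to a vertex `v` of level `j` when
there is a path from `u` to `v` traversing only ε-edges and marker edges labeled ∅,
whose last edge is an ε-edge. -/
def ReachRel (G : LMDAG β M) (i j : ℕ) (u v : β × ℕ) : Prop :=
  u ∈ G.verts ∧ v ∈ G.verts ∧ u.2 = i ∧ v.2 = j ∧
  ∃ L, G.Path u L v ∧ (∀ l ∈ L, l = none ∨ l = some (∅ : Finset (M × ℕ))) ∧
    L.getLast? = some none

/-- Paths as data: `IsPathL G u steps w` holds when `steps` is the list of
(label, target vertex) pairs of the successive edges of a path from `u` to `w`. -/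
def IsPathL (G : LMDAG β M) : β × ℕ → List (Option (Finset (M × ℕ)) × (β × ℕ)) → β × ℕ → Prop
  | u, [], w => u = w
  | u, e :: rest, w => G.edge u e.1 e.2 ∧ G.IsPathL e.2 rest w

/-- An `S`-path: a path with no ε-edge whose labels are exactly the elements of `S`,
each occurring exactly once. -/
def ExactPath [DecidableEq M] (G : LMDAG β M) (S : Set (Finset (M × ℕ)))
    (u v : β × ℕ) : Prop :=
  ∃ L, G.Path u L v ∧ (∀ l ∈ L, ∃ s ∈ S, l = some s) ∧
    ∀ s ∈ S, List.count (some s) L = 1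

/-- An `S⁺/S⁻`-path: a path with no ε-edge and no edge labeled by an element of `S⁻`,
on which every label of `S⁺` occurs exactly once. -/
def PMPath [DecidableEq M] (G : LMDAG β M) (Sp Sm : Set (Finset (M × ℕ)))
    (u v : β × ℕ) : Prop :=
  ∃ L, G.Path u L v ∧ (∀ l ∈ L, l ≠ none ∧ ∀ s ∈ Sm, l ≠ some s) ∧
    ∀ s ∈ Sp, List.count (some s) L = 1

end LMDAG

/-- An extended VA: letter transitions and ev-transitions reading a (possibly empty)
finite set of variable markers; states are partitioned via `evState` into ev-states
and letter-states. -/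
structure EVA (Sig V Q : Type) : Type where
  init : Q
  final : Set Q
  evState : Q → Prop
  letterTr : Q → Sig → Q → Prop
  evTr : Q → Finset (Marker V) → Q → Prop

namespace EVA

/-- The data of a run of an extended VA on a document of length `n`:
states `qs i`, `qs' i` and marker sets `Ms i` for `0 ≤ i ≤ n`. -/
structure RunData (Q V : Type) (n : ℕ) : Type where
  qs : Fin (n + 1) → Q
  qs' : Fin (n + 1) → Q
  Ms : Fin (n + 1) → Finset (Marker V)

variable {Sig V Q : Type}

/-- Wellformedness of the partition into ev-states and letter-states: ev-transitions go
from ev-states to letter-states, letter transitions from letter-states to ev-states,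
the initial state is an ev-state, and all final states are letter-states. -/
def WF (A : EVA Sig V Q) : Prop :=
  (∀ q M q', A.evTr q M q' → A.evState q ∧ ¬ A.evState q') ∧
  (∀ q a q', A.letterTr q a q' → ¬ A.evState q ∧ A.evState q') ∧
  A.evState A.init ∧ ∀ q ∈ A.final, ¬ A.evState q

/-- `r` is an accepting run of `A` on `d`:
`(q₀,0) →^{M₀} (q₀',0) →^{d₀} (q₁,1) →^{M₁} ⋯ →^{d_{n-1}} (q_n,n) →^{M_n} (q_n',n)`
with `q₀` the initial state and `q_n'` final. -/
def IsAccRun (A : EVA Sig V Q) (d : List Sig) (r : RunData Q V d.length) : Prop :=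
  r.qs 0 = A.init ∧
  (∀ i, A.evTr (r.qs i) (r.Ms i) (r.qs' i)) ∧
  (∀ i : Fin d.length, A.letterTr (r.qs' i.castSucc) (d.get i) (r.qs i.succ)) ∧
  r.qs' (Fin.last d.length) ∈ A.final

/-- The set of (marker, position) pairs read by a run. -/
def readSet {n : ℕ} (r : RunData Q V n) : Set (Marker V × ℕ) :=
  {p | ∃ i : Fin (n + 1), (i : ℕ) = p.2 ∧ p.1 ∈ r.Ms i}

/-- A valid run: an accepting run where every marker is read at most once and every open
marker read at position `i` is matched by the close marker read at some `i' ≥ i`. -/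
def IsValidRun (A : EVA Sig V Q) (d : List Sig) (r : RunData Q V d.length) : Prop :=
  A.IsAccRun d r ∧
  (∀ (m : Marker V) (i j : Fin (d.length + 1)), m ∈ r.Ms i → m ∈ r.Ms j → i = j) ∧
  (∀ (x : V) (i : Fin (d.length + 1)), Marker.openM x ∈ r.Ms i →
      ∃ j : Fin (d.length + 1), (i : ℕ) ≤ (j : ℕ) ∧ Marker.closeM x ∈ r.Ms j)

/-- An extended VA is sequential when every accepting run on every document is valid. -/
def Sequential (A : EVA Sig V Q) : Prop :=
  ∀ (d : List Sig) (r : RunData Q V d.length), A.IsAccRun d r → A.IsValidRun d r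

/-- The mappings of an extended VA on a document, each written as the set of pairs
`(m, i)` of a marker `m` read at position `i` in a valid run. -/
def mappings (A : EVA Sig V Q) (d : List Sig) : Set (Set (Marker V × ℕ)) :=
  {T | ∃ r : RunData Q V d.length, A.IsValidRun d r ∧ T = readSet r}

/-- The product DAG of an extended VA `A` and a document `d`: vertices
`Q × {0,…,n} ∪ {v_f}` (with `v_f = (none, n+1)` fresh), ε-edges for letter transitions
matching the document, marker edges labeled `{(m, i) | m ∈ M}` for ev-transitions at
each position `i`, and final ε-edges from `(q, n)`, `q` final, to `v_f`. -/
def productDAG [DecidableEq V] (A : EVA Sig V Q) (d : List Sig) :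
    LMDAG (Option Q) (Marker V) where
  verts := {v | (∃ q : Q, v.1 = some q ∧ v.2 ≤ d.length) ∨ v = (none, d.length + 1)}
  init := (some A.init, 0)
  final := (none, d.length + 1)
  edge := fun u l v =>
    (∃ (q : Q) (a : Sig) (q' : Q) (i : ℕ), A.letterTr q a q' ∧ d[i]? = some a ∧
        u = (some q, i) ∧ v = (some q', i + 1) ∧ l = none) ∨
    (∃ (q : Q) (Mset : Finset (Marker V)) (q' : Q) (i : ℕ),
        A.evTr q Mset q' ∧ i ≤ d.length ∧
        u = (some q, i) ∧ v = (some q', i) ∧ l = some (Mset.image fun m => (m, i))) ∨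
    (∃ q : Q, q ∈ A.final ∧ u = (some q, d.length) ∧ v = (none, d.length + 1) ∧ l = none)

end EVA

namespace VA

variable {Sig V Q : Type}

/-- The product DAG of a (non-extended) VA `A` and a document `d`: vertices
`Q × {0,…,n} ∪ {v_f}` (with `v_f = (none, n+1)` fresh), ε-edges for letter transitions
matching the document, marker edges labeled `{(m, i)}` for variable transitions at each
position `i`, and final ε-edges from `(q, n)`, `q` final, to `v_f`. -/
def productDAG (A : VA Sig V Q) (d : List Sig) : LMDAG (Option Q) (Marker V) where
  verts := {v | (∃ q : Q, v.1 = some q ∧ v.2 ≤ d.length) ∨ v = (none, d.length + 1)}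
  init := (some A.init, 0)
  final := (none, d.length + 1)
  edge := fun u l v =>
    (∃ (q : Q) (a : Sig) (q' : Q) (i : ℕ), A.letterTr q a q' ∧ d[i]? = some a ∧
        u = (some q, i) ∧ v = (some q', i + 1) ∧ l = none) ∨
    (∃ (q : Q) (m : Marker V) (q' : Q) (i : ℕ), A.varTr q m q' ∧ i ≤ d.length ∧
        u = (some q, i) ∧ v = (some q', i) ∧ l = some {(m, i)}) ∨
    (∃ q : Q, q ∈ A.final ∧ u = (some q, d.length) ∧ v = (none, d.length + 1) ∧ l = none)

end VA

/-! A vertex of `Λ` is reached from `v₀` by a path of even length (it is followed by a marker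
edge), so by normalization every path from it to `v_f` starts with a marker edge and an ε-edge;
cutting these two edges off splits `M(Λ)` according to `NextLevel(Λ)`. The labels of a marker
edge leaving `Λ` sit exactly at level `level(Λ)`, while every mapping in `M(Λ″)` lives strictly
above it; hence a mapping in the union remembers its label `S`, and `S` determines `Λ″`. -/

namespace LMDAG

variable {β M : Type} {G : LMDAG β M}

theorem Path.eq_of_nil {u w : β × ℕ} (h : G.Path u [] w) : u = w := by
  cases h; rfl

theorem Path.exists_of_cons {u w : β × ℕ} {l : Option (Finset (M × ℕ))}
    {L : List (Option (Finset (M × ℕ)))} (h : G.Path u (l :: L) w) :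
    ∃ v, G.edge u l v ∧ G.Path v L w := by
  cases h with
  | step he hp => exact ⟨_, he, hp⟩

theorem Path.append {u v w : β × ℕ} {L₁ L₂ : List (Option (Finset (M × ℕ)))}
    (h₁ : G.Path u L₁ v) (h₂ : G.Path v L₂ w) : G.Path u (L₁ ++ L₂) w := by
  induction h₁ with
  | refl => exact h₂
  | step he _ ih => exact .step he (ih h₂)

theorem Alt.of_cons_cons {a b : Option (Finset (M × ℕ))} {L : List (Option (Finset (M × ℕ)))}
    (h : Alt (a :: b :: L)) (hL : L ≠ []) : Alt L := by
  cases h with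
  | base => exact absurd rfl hL
  | cons _ h => exact h

theorem Alt.eq_cons {L : List (Option (Finset (M × ℕ)))} (h : Alt L) :
    ∃ S L', L = some S :: none :: L' := by
  cases h with
  | base S => exact ⟨S, [], rfl⟩
  | cons S _ => exact ⟨S, _, rfl⟩

/-- Marker labels occupy exactly the even positions of an alternating list, so `L₁` has even
length. -/
theorem Alt.of_append {S : Finset (M × ℕ)} {L₁ L₂ L : List (Option (Finset (M × ℕ)))}
    (h : Alt (L₁ ++ some S :: L₂)) (h' : Alt (L₁ ++ L)) (hL : L ≠ []) : Alt L := by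
  generalize hX : L₁ ++ some S :: L₂ = X at h
  induction h generalizing L₁ with
  | base S' =>
    rcases L₁ with _ | ⟨a, _ | ⟨b, L₁⟩⟩
    · simpa using h'
    · simp at hX
    · simp at hX
  | cons S' _ ih =>
    rcases L₁ with _ | ⟨a, _ | ⟨b, L₁⟩⟩
    · simpa using h'
    · simp at hX
    · simp only [List.cons_append, List.cons.injEq] at hX
      exact ih (h'.of_cons_cons (by simp [hL])) hX.2.2

theorem mu_cons_some (S : Finset (M × ℕ)) (L : List (Option (Finset (M × ℕ)))) :
    mu (some S :: L) = ↑S ∪ mu L := by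
  ext p
  simp [mu]

theorem mu_cons_none (L : List (Option (Finset (M × ℕ)))) : mu (none :: L) = mu L := by
  ext p
  simp [mu]

theorem Leveled.level_le_of_mem_mu (hlev : G.Leveled) {u w : β × ℕ}
    {L : List (Option (Finset (M × ℕ)))} (h : G.Path u L w) {p : M × ℕ} (hp : p ∈ mu L) :
    u.2 ≤ p.2 := by
  induction h with
  | refl => simp [mu] at hp
  | @step u l v L w he _ ih =>
    cases l with
    | none =>
      rw [mu_cons_none] at hp
      have := hlev.2.1 u v he
      have := ih hp
      omega
    | some S =>
      obtain ⟨hv, hS⟩ := hlev.2.2 u S v he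
      rw [mu_cons_some] at hp
      rcases hp with hp | hp
      · exact (hS p hp).ge
      · exact hv ▸ ih hp

theorem Trimmed.exists_alt_prefix (hnorm : G.Normalized) (htrim : G.Trimmed) {v : β × ℕ}
    (hv : v ∈ G.verts) : ∃ L₀, ∀ L, G.Path v L G.final → Alt (L₀ ++ L) :=
  let ⟨L₀, hL₀⟩ := (htrim v hv).1
  ⟨L₀, fun _ hL => hnorm _ (hL₀.append hL)⟩

theorem alt_of_path_of_marker_edge (hG : G.IsMappingDAG) (hnorm : G.Normalized)
    (htrim : G.Trimmed) {v v' : β × ℕ} {S : Finset (M × ℕ)} (hv : v ∈ G.verts)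
    (he : G.edge v (some S) v') {L : List (Option (Finset (M × ℕ)))}
    (hL : G.Path v L G.final) : Alt L := by
  obtain ⟨L₀, hL₀⟩ := htrim.exists_alt_prefix hnorm hv
  obtain ⟨L₂, hL₂⟩ := (htrim v' (hG.2.2.1 _ _ _ he).2).2
  refine (hL₀ _ (.step he hL₂)).of_append (hL₀ L hL) ?_
  rintro rfl
  have hcycle : G.Path v (some S :: L₂) v := by
    rw [← hL.eq_of_nil] at hL₂
    exact .step he hL₂
  simpa using hG.2.2.2.1 _ _ hcycle

theorem exists_eps_edge_of_marker_edge (hG : G.IsMappingDAG) (hnorm : G.Normalized)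
    (htrim : G.Trimmed) {v v' : β × ℕ} {S : Finset (M × ℕ)} (hv : v ∈ G.verts)
    (he : G.edge v (some S) v') : ∃ w L, G.edge v' none w ∧ G.Path w L G.final := by
  obtain ⟨L₂, hL₂⟩ := (htrim v' (hG.2.2.1 _ _ _ he).2).2
  obtain ⟨_, L, ⟨⟩⟩ := (alt_of_path_of_marker_edge hG hnorm htrim hv he (.step he hL₂)).eq_cons
  obtain ⟨w, he', hw⟩ := hL₂.exists_of_cons
  exact ⟨w, L, he', hw⟩

section LevelSet

variable {Λ : Set (β × ℕ)}

theorem mk_mem_nextLevel {v v' : β × ℕ} {S : Finset (M × ℕ)} (hv : v ∈ Λ)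
    (he : G.edge v (some S) v') :
    (S, {w | ∃ v ∈ Λ, ∃ v', G.edge v (some S) v' ∧ G.edge v' none w}) ∈ G.NextLevel Λ :=
  ⟨⟨v, hv, v', he⟩, rfl⟩

theorem eq_of_mem_nextLevel_of_fst_eq {p q : Finset (M × ℕ) × Set (β × ℕ)}
    (hp : p ∈ G.NextLevel Λ) (hq : q ∈ G.NextLevel Λ) (h : p.1 = q.1) : p = q :=
  Prod.ext h (by rw [hp.2, hq.2, h])

theorem nextLevel_nonempty (hne : Λ.Nonempty) (hΛ : ∀ v ∈ Λ, ∃ S w, G.edge v (some S) w) :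
    (G.NextLevel Λ).Nonempty :=
  let ⟨v, hv⟩ := hne
  let ⟨_, _, he⟩ := hΛ v hv
  ⟨_, mk_mem_nextLevel hv he⟩

theorem mapSet_eq_biUnion_nextLevel (hG : G.IsMappingDAG) (hnorm : G.Normalized)
    (htrim : G.Trimmed) (hΛ : ∀ v ∈ Λ, v ∈ G.verts ∧ ∃ S w, G.edge v (some S) w) :
    G.MapSet Λ = ⋃ p ∈ G.NextLevel Λ, (fun T => ↑p.1 ∪ T) '' G.MapSet p.2 := by
  ext T
  simp only [Set.mem_iUnion, Set.mem_image, exists_prop]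
  constructor
  · rintro ⟨v, hv, L, hL, rfl⟩
    obtain ⟨hvG, _, _, he₀⟩ := hΛ v hv
    obtain ⟨S, L', rfl⟩ := (alt_of_path_of_marker_edge hG hnorm htrim hvG he₀ hL).eq_cons
    obtain ⟨v', he, hL⟩ := hL.exists_of_cons
    obtain ⟨w, he', hL'⟩ := hL.exists_of_cons
    exact ⟨_, mk_mem_nextLevel hv he, mu L', ⟨w, ⟨v, hv, v', he, he'⟩, L', hL', rfl⟩,
      by rw [mu_cons_some, mu_cons_none]⟩
  · rintro ⟨p, ⟨-, hp₂⟩, _, ⟨w, hw, L, hL, rfl⟩, rfl⟩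
    obtain ⟨v, hv, v', he, he'⟩ := hp₂ ▸ hw
    exact ⟨v, hv, _, .step he (.step he' hL), by rw [mu_cons_some, mu_cons_none]⟩

theorem image_union_mapSet_nonempty (hG : G.IsMappingDAG) (hnorm : G.Normalized)
    (htrim : G.Trimmed) (hΛ : ∀ v ∈ Λ, v ∈ G.verts) {p : Finset (M × ℕ) × Set (β × ℕ)}
    (hp : p ∈ G.NextLevel Λ) : ((fun T => ↑p.1 ∪ T) '' G.MapSet p.2).Nonempty := by
  obtain ⟨⟨v, hv, v', he⟩, hp₂⟩ := hp
  obtain ⟨w, L, he', hL⟩ := exists_eps_edge_of_marker_edge hG hnorm htrim (hΛ v hv) he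
  exact .image _ ⟨mu L, w, hp₂ ▸ ⟨v, hv, v', he, he'⟩, L, hL, rfl⟩

theorem Leveled.union_mapSet_inter_level_eq (hlev : G.Leveled) {i : ℕ}
    (hΛ : ∀ v ∈ Λ, v.2 = i) {p : Finset (M × ℕ) × Set (β × ℕ)} (hp : p ∈ G.NextLevel Λ)
    {T : Set (M × ℕ)} (hT : T ∈ G.MapSet p.2) : (↑p.1 ∪ T) ∩ {x | x.2 = i} = ↑p.1 := by
  obtain ⟨⟨v, hv, v', he⟩, hp₂⟩ := hp
  have hS : ↑p.1 ⊆ {x : M × ℕ | x.2 = i} := fun x hx =>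
    ((hlev.2.2 v _ v' he).2 x hx).trans (hΛ v hv)
  have hT : ∀ x ∈ T, x ∉ {x : M × ℕ | x.2 = i} := by
    obtain ⟨w, hw, L, hL, rfl⟩ := hT
    rw [hp₂] at hw
    obtain ⟨u, hu, u', hu', hw⟩ := hw
    intro x hx (hxi : x.2 = i)
    have hwx : w.2 ≤ x.2 := hlev.level_le_of_mem_mu hL hx
    have hw' : w.2 = u'.2 + 1 := hlev.2.1 u' w hw
    have hu' : u'.2 = u.2 := (hlev.2.2 u _ u' hu').1
    have hu : u.2 = i := hΛ u hu
    omega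
  rw [Set.union_inter_distrib_right, Set.inter_eq_left.2 hS, (Set.disjoint_left.2 hT).inter_eq,
    Set.union_empty]

theorem Leveled.pairwiseDisjoint_image_union_mapSet (hlev : G.Leveled) {i : ℕ}
    (hΛ : ∀ v ∈ Λ, v.2 = i) :
    (G.NextLevel Λ).PairwiseDisjoint fun p => (fun T => ↑p.1 ∪ T) '' G.MapSet p.2 := by
  intro p hp q hq hpq
  rw [Function.onFun, Set.disjoint_left]
  rintro _ ⟨T, hT, rfl⟩ ⟨T', hT', hTT'⟩
  refine hpq (eq_of_mem_nextLevel_of_fst_eq hp hq (Finset.coe_injective ?_))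
  rw [← hlev.union_mapSet_inter_level_eq hΛ hp hT, ← hlev.union_mapSet_inter_level_eq hΛ hq hT']
  exact congrArg (· ∩ _) hTT'.symm

end LevelSet

end LMDAG

open LMDAG in
theorem stmt7 {β M : Type} (G : LMDAG β M) (hG : G.IsMappingDAG)
    (hnorm : G.Normalized) (hlev : G.Leveled) (htrim : G.Trimmed)
    (Λ : Set (β × ℕ)) (hΛ : G.IsLevelSet Λ) (hne : Λ ≠ {G.final}) :
    G.MapSet Λ = (⋃ p ∈ G.NextLevel Λ, (fun T => ↑p.1 ∪ T) '' G.MapSet p.2) ∧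
    (∀ p ∈ G.NextLevel Λ, ∀ q ∈ G.NextLevel Λ, p ≠ q →
      Disjoint ((fun T => ↑p.1 ∪ T) '' G.MapSet p.2)
        ((fun T => ↑q.1 ∪ T) '' G.MapSet q.2)) ∧
    (G.NextLevel Λ).Nonempty ∧
    ∀ p ∈ G.NextLevel Λ, ((fun T => ↑p.1 ∪ T) '' G.MapSet p.2).Nonempty := by
  obtain ⟨hΛne, ⟨i, hi⟩, hΛ⟩ := hΛ.resolve_left hne
  exact ⟨mapSet_eq_biUnion_nextLevel hG hnorm htrim hΛ,
    fun p hp q hq hpq => hlev.pairwiseDisjoint_image_union_mapSet hi hp hq hpq,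
    nextLevel_nonempty hΛne fun v hv => (hΛ v hv).2,
    fun p hp => image_union_mapSet_nonempty hG hnorm htrim (fun v hv => (hΛ v hv).1) hp⟩

end Spanners
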